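/- arXiv:1303.7426 — 8 statements merged into one kernel-verified Lean document; each statement's English description precedes it below -/
import Mathlib

section
/- Let D be a self-adjoint operator on H and a a bounded operator on H. If a is weakly D-differentiable (i.e., the sesquilinear form (ξ,η) ↦ ⟨aξ, Dη⟩ − ⟨aDξ, η⟩ on dom(D) × dom(D) is bounded, implemented by a bounded operator wD(a)), then for all real t, ‖e^{itD} a e^{-itD} − a‖ ≤ |t| · ‖wD(a)‖. -/
open Complex Filter Topology MeasureTheory
open scoped Topology

local notation "⟪" x ", " y "⟫" => @inner ℂ _ _ x y

variable {H : Type*} [NormedAddCommGroup H] [InnerProductSpace ℂ H] [CompleteSpace H]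

/-- `b` is the bounded operator implementing the commutator form
`(ξ, η) ↦ ⟨aξ, Dη⟩ − ⟨aDξ, η⟩` on `dom D × dom D`; i.e. `a` is weakly `D`-differentiable
with derivative `wD(a) = b`. -/
def IsWeakDeriv (D : H →ₗ.[ℂ] H) (a b : H →L[ℂ] H) : Prop :=
  ∀ ξ η : D.domain, ⟪b (ξ : H), (η : H)⟫ = ⟪a (ξ : H), D η⟫ - ⟪a (D ξ), (η : H)⟫

/-- `conjAd U t a = U t ∘ a ∘ U (−t)`, i.e. `α_t(a) = e^{itD} a e^{-itD}`. -/
noncomputable def conjAd (U : ℝ → H →L[ℂ] H) (t : ℝ) (a : H →L[ℂ] H) : H →L[ℂ] H :=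
  (U t).comp (a.comp (U (-t)))

/-- `U` is the strongly continuous one-parameter unitary group `t ↦ e^{itD}`
generated by the self-adjoint operator `D` (Stone's theorem characterization). -/
structure IsStoneGroupOf (D : H →ₗ.[ℂ] H) (U : ℝ → H →L[ℂ] H) : Prop where
  map_zero : U 0 = 1
  map_add : ∀ s t : ℝ, U (s + t) = (U s).comp (U t)
  isometry : ∀ (t : ℝ) (ξ : H), ‖U t ξ‖ = ‖ξ‖
  hasDerivAt : ∀ ξ : D.domain, HasDerivAt (fun t : ℝ => U t (ξ : H)) (Complex.I • D ξ) 0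
  mem_domain : ∀ ξ v : H, HasDerivAt (fun t : ℝ => U t ξ) v 0 → ξ ∈ D.domain

/-!
Pair `α_t(a) - a` with vectors `ξ, η ∈ dom D`. Since `U` preserves `dom D` and commutes with `D`
there, `s ↦ ⟨α_s(a) ξ, η⟩ = ⟨a U(-s)ξ, U(-s)η⟩` is differentiable with derivative
`⟨i α_s(wD(a)) ξ, η⟩`, which is bounded by `‖wD(a)‖ ‖ξ‖ ‖η‖` because `U` is unitary. The mean
value inequality bounds the matrix coefficients of `α_t(a) - a` on the dense subspace `dom D`,
and hence its norm.
-/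

namespace ContinuousLinearMap

variable {𝕜 E F : Type*} [RCLike 𝕜] [NormedAddCommGroup E] [InnerProductSpace 𝕜 E]
  [NormedAddCommGroup F] [InnerProductSpace 𝕜 F]

theorem opNorm_le_of_norm_inner_le_of_dense (T : E →L[𝕜] F) {s : Set E} {t : Set F}
    (hs : Dense s) (ht : Dense t) {C : ℝ} (hC : 0 ≤ C)
    (h : ∀ x ∈ s, ∀ y ∈ t, ‖inner 𝕜 (T x) y‖ ≤ C * ‖x‖ * ‖y‖) : ‖T‖ ≤ C := by
  have hall : ∀ p : E × F, ‖inner 𝕜 (T p.1) p.2‖ ≤ C * ‖p.1‖ * ‖p.2‖ :=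
    (hs.prod ht).induction (fun p hp ↦ h p.1 hp.1 p.2 hp.2) <|
      isClosed_le (by fun_prop) (by fun_prop)
  refine opNorm_le_of_re_inner_le hC fun x y hx hy ↦ ?_
  calc RCLike.re (inner 𝕜 (T x) y) ≤ ‖inner 𝕜 (T x) y‖ := RCLike.re_le_norm _
    _ ≤ C := by simpa [hx, hy] using hall (x, y)

end ContinuousLinearMap

namespace IsStoneGroupOf

variable {E : Type*} [NormedAddCommGroup E] [InnerProductSpace ℂ E]
  {D : E →ₗ.[ℂ] E} {U : ℝ → E →L[ℂ] E}

theorem apply_add (hU : IsStoneGroupOf D U) (s r : ℝ) (x : E) : U (s + r) x = U s (U r x) := by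
  rw [hU.map_add]; rfl

theorem apply_apply_neg (hU : IsStoneGroupOf D U) (s : ℝ) (x : E) : U s (U (-s) x) = x := by
  rw [← hU.apply_add, add_neg_cancel, hU.map_zero, one_apply_eq_self]

theorem inner_map_map (hU : IsStoneGroupOf D U) (s : ℝ) (x y : E) : ⟪U s x, U s y⟫ = ⟪x, y⟫ :=
  LinearIsometry.inner_map_map ⟨(U s).toLinearMap, hU.isometry s⟩ x y

theorem opNorm_le_one (hU : IsStoneGroupOf D U) (s : ℝ) : ‖U s‖ ≤ 1 :=
  (U s).opNorm_le_bound zero_le_one fun x ↦ by rw [hU.isometry, one_mul]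

theorem hasDerivAt_apply (hU : IsStoneGroupOf D U) (ξ : D.domain) (s : ℝ) :
    HasDerivAt (fun r ↦ U r (ξ : E)) (I • U s (D ξ)) s := by
  have h₀ : HasDerivAt (fun r ↦ U s (U r (ξ : E))) (U s (I • D ξ)) 0 :=
    ((U s).hasFDerivAt.restrictScalars ℝ).comp_hasDerivAt 0 (hU.hasDerivAt ξ)
  simp only [← hU.apply_add, map_smul] at h₀
  have h₁ := HasDerivAt.comp_const_add (f := fun r ↦ U (s + r) (ξ : E)) (-s) s
    (by rwa [neg_add_cancel])
  simpa only [add_neg_cancel_left] using h₁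

theorem hasDerivAt_apply_neg (hU : IsStoneGroupOf D U) (ξ : D.domain) (s : ℝ) :
    HasDerivAt (fun r ↦ U (-r) (ξ : E)) (-(I • U (-s) (D ξ))) s := by
  simpa [Function.comp_def] using (hU.hasDerivAt_apply ξ (-s)).scomp s (hasDerivAt_neg s)

theorem hasDerivAt_apply_apply (hU : IsStoneGroupOf D U) (ξ : D.domain) (s : ℝ) :
    HasDerivAt (fun r ↦ U r (U s (ξ : E))) (I • U s (D ξ)) 0 := by
  have h := HasDerivAt.comp_add_const 0 s (by rw [zero_add]; exact hU.hasDerivAt_apply ξ s)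
  simpa only [hU.apply_add] using h

theorem apply_mem_domain (hU : IsStoneGroupOf D U) (s : ℝ) (ξ : D.domain) :
    U s (ξ : E) ∈ D.domain :=
  hU.mem_domain _ _ (hU.hasDerivAt_apply_apply ξ s)

theorem apply_domain_apply (hU : IsStoneGroupOf D U) (s : ℝ) (ξ : D.domain) :
    D ⟨U s ξ, hU.apply_mem_domain s ξ⟩ = U s (D ξ) :=
  smul_right_injective E I_ne_zero <|
    (hU.hasDerivAt ⟨U s ξ, hU.apply_mem_domain s ξ⟩).unique (hU.hasDerivAt_apply_apply ξ s)

theorem inner_conjAd_apply (hU : IsStoneGroupOf D U) (t : ℝ) (a : E →L[ℂ] E) (x y : E) :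
    ⟪conjAd U t a x, y⟫ = ⟪a (U (-t) x), U (-t) y⟫ := by
  conv_lhs => rw [← hU.apply_apply_neg t y]
  exact hU.inner_map_map t _ _

theorem conjAd_zero (hU : IsStoneGroupOf D U) (a : E →L[ℂ] E) : conjAd U 0 a = a := by
  ext x
  simp [conjAd, hU.map_zero]

theorem norm_conjAd_le (hU : IsStoneGroupOf D U) (t : ℝ) (a : E →L[ℂ] E) :
    ‖conjAd U t a‖ ≤ ‖a‖ :=
  calc ‖conjAd U t a‖ ≤ ‖U t‖ * (‖a‖ * ‖U (-t)‖) :=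
        (U t).opNorm_comp_le _ |>.trans <| by gcongr; exact a.opNorm_comp_le _
    _ ≤ 1 * (‖a‖ * 1) := by gcongr <;> exact hU.opNorm_le_one _
    _ = ‖a‖ := by ring

theorem hasDerivAt_inner_conjAd_apply (hU : IsStoneGroupOf D U) {a b : E →L[ℂ] E}
    (hw : IsWeakDeriv D a b) (ξ η : D.domain) (s : ℝ) :
    HasDerivAt (fun r ↦ ⟪conjAd U r a ξ, η⟫) ⟪I • conjAd U s b ξ, η⟫ s := by
  have hab : ⟪b (U (-s) ξ), U (-s) η⟫
      = ⟪a (U (-s) ξ), U (-s) (D η)⟫ - ⟪a (U (-s) (D ξ)), U (-s) η⟫ := by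
    simpa only [hU.apply_domain_apply] using
      hw ⟨_, hU.apply_mem_domain (-s) ξ⟩ ⟨_, hU.apply_mem_domain (-s) η⟩
  have hderiv : HasDerivAt (fun r ↦ ⟪a (U (-r) ξ), U (-r) η⟫)
      (⟪a (U (-s) ξ), -(I • U (-s) (D η))⟫ + ⟪a (-(I • U (-s) (D ξ))), U (-s) η⟫) s :=
    ((a.hasFDerivAt.restrictScalars ℝ).comp_hasDerivAt s (hU.hasDerivAt_apply_neg ξ s)).inner ℂ
      (hU.hasDerivAt_apply_neg η s)
  rw [funext fun r ↦ hU.inner_conjAd_apply r a ξ η]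
  convert hderiv using 1
  simp only [inner_smul_left, hU.inner_conjAd_apply, hab, map_neg, map_smul, inner_neg_left,
    inner_neg_right, inner_smul_right, conj_I]
  ring

theorem norm_inner_conjAd_sub_le (hU : IsStoneGroupOf D U) {a b : E →L[ℂ] E}
    (hw : IsWeakDeriv D a b) (ξ η : D.domain) (t : ℝ) :
    ‖⟪(conjAd U t a - a) ξ, η⟫‖ ≤ |t| * ‖b‖ * ‖(ξ : E)‖ * ‖(η : E)‖ := by
  have hderiv_le (s : ℝ) : ‖⟪I • conjAd U s b ξ, η⟫‖ ≤ ‖b‖ * ‖(ξ : E)‖ * ‖(η : E)‖ :=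
    calc ‖⟪I • conjAd U s b ξ, η⟫‖ ≤ ‖conjAd U s b‖ * ‖(ξ : E)‖ * ‖(η : E)‖ := by
          simpa [norm_smul] using
            (norm_inner_le_norm _ _).trans (by gcongr; exact (conjAd U s b).le_opNorm _)
      _ ≤ ‖b‖ * ‖(ξ : E)‖ * ‖(η : E)‖ := by gcongr; exact hU.norm_conjAd_le s b
  have hmvt := convex_univ.norm_image_sub_le_of_norm_hasDerivWithin_le
    (fun s _ ↦ (hU.hasDerivAt_inner_conjAd_apply hw ξ η s).hasDerivWithinAt)
    (fun s _ ↦ hderiv_le s) (Set.mem_univ 0) (Set.mem_univ t)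
  rw [hU.conjAd_zero, sub_zero, Real.norm_eq_abs] at hmvt
  rw [sub_apply, inner_sub_left]
  linarith [hmvt]

end IsStoneGroupOf

/-- If `a` is weakly `D`-differentiable with derivative `b = wD(a)` then
`‖α_t(a) − a‖ ≤ |t| ‖wD(a)‖` for every real `t`. -/
theorem norm_conjAd_sub_le_of_isWeakDeriv
    (D : H →ₗ.[ℂ] H) (hD : IsSelfAdjoint D)
    (U : ℝ → H →L[ℂ] H) (hU : IsStoneGroupOf D U)
    (a b : H →L[ℂ] H) (hw : IsWeakDeriv D a b) :
    ∀ t : ℝ, ‖conjAd U t a - a‖ ≤ |t| * ‖b‖ := fun t ↦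
  (conjAd U t a - a).opNorm_le_of_norm_inner_le_of_dense hD.dense_domain hD.dense_domain
    (by positivity) fun ξ hξ η hη ↦ hU.norm_inner_conjAd_sub_le hw ⟨ξ, hξ⟩ ⟨η, hη⟩ t
end

section
/- Let D be a self-adjoint operator on H and a ∈ B(H). If for every pair of vectors μ, ν ∈ H the function t ↦ ⟨e^{itD} a e^{-itD} μ, ν⟩ is differentiable at t = 0, then sup_{t ≠ 0} ‖(e^{itD} a e^{-itD} − a)/t‖ < ∞ (a is D-Lipschitz). -/
/-!
A difference quotient of a function that is differentiable at a point and bounded everywhere is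
bounded, so the differentiability hypothesis makes every matrix coefficient of the family
`t⁻¹ (α_t(a) - a)`, `t ≠ 0`, bounded (each `α_t` is isometric). Applying the uniform boundedness
principle once to the vectors `t⁻¹ (α_t(a) - a) μ`, seen as functionals through the Riesz map,
and once more to the operators themselves, bounds `‖t⁻¹ (α_t(a) - a)‖` uniformly in `t`.
-/

open Complex Filter Topology MeasureTheory
open scoped Topology

local notation "⟪" x ", " y "⟫" => @inner ℂ _ _ x y

variable {H : Type*} [NormedAddCommGroup H] [InnerProductSpace ℂ H] [CompleteSpace H]

theorem HasDerivAt.exists_norm_slope_le {𝕜 E : Type*} [NontriviallyNormedField 𝕜]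
    [NormedAddCommGroup E] [NormedSpace 𝕜 E] {f : 𝕜 → E} {f' : E} {x : 𝕜} {M : ℝ}
    (hf : HasDerivAt f f' x) (hM : ∀ t, ‖f t‖ ≤ M) : ∃ C, ∀ t, ‖slope f x t‖ ≤ C := by
  have hnear : ∀ᶠ t in 𝓝[≠] x, ‖slope f x t‖ < ‖f'‖ + 1 :=
    hf.tendsto_slope.norm.eventually (gt_mem_nhds (lt_add_one _))
  obtain ⟨δ, hδ, hδball⟩ := Metric.eventually_nhds_iff.mp (eventually_nhdsWithin_iff.mp hnear)
  refine ⟨max (‖f'‖ + 1) (δ⁻¹ * (2 * M)), fun t => ?_⟩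
  by_cases htx : t = x
  · rw [htx, slope_same, norm_zero]
    exact le_max_of_le_left (by positivity)
  rcases lt_or_ge (dist t x) δ with hlt | hge
  · exact le_max_of_le_left (hδball hlt htx).le
  · refine le_max_of_le_right ?_
    rw [slope_def_module, norm_smul, norm_inv, ← dist_eq_norm]
    have hsub : ‖f t - f x‖ ≤ 2 * M := by
      linarith [norm_sub_le (f t) (f x), hM t, hM x]
    gcongr

section UniformBoundedness

variable {𝕜 E F ι : Type*} [RCLike 𝕜] [NormedAddCommGroup E] [NormedSpace 𝕜 E]
  [NormedAddCommGroup F] [InnerProductSpace 𝕜 F] [CompleteSpace F]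

theorem exists_norm_le_of_forall_norm_inner_le {x : ι → F}
    (h : ∀ y, ∃ C, ∀ i, ‖inner 𝕜 y (x i)‖ ≤ C) : ∃ C, ∀ i, ‖x i‖ ≤ C := by
  obtain ⟨C, hC⟩ := banach_steinhaus (g := fun i => innerSL 𝕜 (x i)) fun y => by
    simpa only [innerSL_apply_apply, norm_inner_symm (x _)] using h y
  exact ⟨C, fun i => (innerSL_apply_norm 𝕜 (x i)).symm.trans_le (hC i)⟩

theorem exists_opNorm_le_of_forall_norm_inner_le [CompleteSpace E] {T : ι → E →L[𝕜] F}
    (h : ∀ x y, ∃ C, ∀ i, ‖inner 𝕜 y (T i x)‖ ≤ C) : ∃ C, ∀ i, ‖T i‖ ≤ C :=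
  banach_steinhaus fun x => exists_norm_le_of_forall_norm_inner_le (h x)

end UniformBoundedness

section ConjAd

variable {E : Type*} [NormedAddCommGroup E] [InnerProductSpace ℂ E] {U : ℝ → E →L[ℂ] E}

theorem conjAd_zero (hU : U 0 = 1) (a : E →L[ℂ] E) : conjAd U 0 a = a := by
  ext ξ
  simp [conjAd, hU]

theorem norm_conjAd_le (hU : ∀ t ξ, ‖U t ξ‖ = ‖ξ‖) (t : ℝ) (a : E →L[ℂ] E) :
    ‖conjAd U t a‖ ≤ ‖a‖ :=
  ContinuousLinearMap.opNorm_le_bound _ (norm_nonneg a) fun ξ => by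
    rw [conjAd, ContinuousLinearMap.comp_apply, ContinuousLinearMap.comp_apply, hU,
      ← hU (-t) ξ]
    exact a.le_opNorm _

end ConjAd

theorem lipschitz_of_weak_matrix_coefficients_differentiable_general
    (D : H →ₗ.[ℂ] H)
    (U : ℝ → H →L[ℂ] H) (hU : IsStoneGroupOf D U)
    (a : H →L[ℂ] H)
    (hdiff : ∀ μ ν : H, ∃ L : ℂ,
      HasDerivAt (fun t : ℝ => ⟪ν, (conjAd U t a) μ⟫) L 0) :
    ∃ c : ℝ, ∀ t : ℝ, t ≠ 0 → ‖conjAd U t a - a‖ ≤ c * |t| := by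
  set α : ℝ → H →L[ℂ] H := fun t => conjAd U t a
  have hcoeff : ∀ μ ν, ∃ C, ∀ t, ‖⟪ν, slope α 0 t μ⟫‖ ≤ C := by
    intro μ ν
    obtain ⟨L, hL⟩ := hdiff μ ν
    have hbound : ∀ t, ‖⟪ν, α t μ⟫‖ ≤ ‖ν‖ * (‖a‖ * ‖μ‖) := fun t =>
      (norm_inner_le_norm _ _).trans <| by
        gcongr; exact (α t).le_of_opNorm_le (norm_conjAd_le hU.isometry t a) μ
    obtain ⟨C, hC⟩ := hL.exists_norm_slope_le hbound
    refine ⟨C, fun t => ?_⟩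
    simpa [slope_def_module] using hC t
  obtain ⟨c, hc⟩ := exists_opNorm_le_of_forall_norm_inner_le hcoeff
  refine ⟨c, fun t _ => ?_⟩
  calc ‖conjAd U t a - a‖ = ‖(t - 0) • slope α 0 t‖ := by
        rw [sub_smul_slope, vsub_eq_sub, show α 0 = a from conjAd_zero hU.map_zero a]
    _ ≤ c * |t| := by
        rw [norm_smul, sub_zero, Real.norm_eq_abs, mul_comm]
        gcongr
        exact hc t

/-- If for all vectors `μ, ν` the function `t ↦ ⟨α_t(a) μ, ν⟩` is differentiable at `0`,
then `a` is `D`-Lipschitz: `sup_{t ≠ 0} ‖(α_t(a) − a)/t‖ < ∞`. -/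
theorem lipschitz_of_weak_matrix_coefficients_differentiable
    (D : H →ₗ.[ℂ] H) (hD : IsSelfAdjoint D)
    (U : ℝ → H →L[ℂ] H) (hU : IsStoneGroupOf D U)
    (a : H →L[ℂ] H)
    (hdiff : ∀ μ ν : H, ∃ L : ℂ,
      HasDerivAt (fun t : ℝ => ⟪ν, (conjAd U t a) μ⟫) L 0) :
    ∃ c : ℝ, ∀ t : ℝ, t ≠ 0 → ‖conjAd U t a - a‖ ≤ c * |t| :=
  lipschitz_of_weak_matrix_coefficients_differentiable_general D U hU a hdiff
end

section
/- Let D be a self-adjoint operator on H and a ∈ B(H) weakly D-differentiable. Then a maps dom(D) into dom(D), and the operator Da − aD (defined on dom(D)) is bounded, with closure equal to wD(a). -/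
open Complex Filter Topology MeasureTheory
open scoped Topology

local notation "⟪" x ", " y "⟫" => @inner ℂ _ _ x y

variable {H : Type*} [NormedAddCommGroup H] [InnerProductSpace ℂ H] [CompleteSpace H]

namespace IsSelfAdjoint

variable {𝕜 E : Type*} [RCLike 𝕜] [NormedAddCommGroup E] [InnerProductSpace 𝕜 E]
  [CompleteSpace E] {A : E →ₗ.[𝕜] E}

theorem exists_mem_domain_apply_eq_of_inner (hA : IsSelfAdjoint A) {x w : E}
    (h : ∀ y : A.domain, inner 𝕜 w (y : E) = inner 𝕜 x (A y)) :
    ∃ hx : x ∈ A.domain, A ⟨x, hx⟩ = w := by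
  have hx : x ∈ A.adjoint.domain := LinearPMap.mem_adjoint_domain_of_exists x ⟨w, h⟩
  have hgraph : (x, w) ∈ A.adjoint.graph :=
    A.adjoint.mem_graph_iff.mpr ⟨⟨x, hx⟩, rfl, LinearPMap.adjoint_apply_eq hA.dense_domain _ h⟩
  rw [LinearPMap.isSelfAdjoint_def.mp hA, LinearPMap.mem_graph_iff] at hgraph
  obtain ⟨⟨y, hy⟩, rfl, hAy⟩ := hgraph
  exact ⟨hy, hAy⟩

end IsSelfAdjoint

theorem weakDeriv_domain_invariant_and_commutator_bounded_general
    (D : H →ₗ.[ℂ] H) (hD : IsSelfAdjoint D)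
    (a b : H →L[ℂ] H) (hw : IsWeakDeriv D a b) :
    ∀ ξ : D.domain, ∃ h : a (ξ : H) ∈ D.domain,
      D ⟨a (ξ : H), h⟩ - a (D ξ) = b (ξ : H) := by
  intro ξ
  have hweak : ∀ η : D.domain, ⟪b (ξ : H) + a (D ξ), (η : H)⟫ = ⟪a (ξ : H), D η⟫ := fun η => by
    rw [inner_add_left, hw ξ η, sub_add_cancel]
  obtain ⟨haξ, hDaξ⟩ := hD.exists_mem_domain_apply_eq_of_inner hweak
  exact ⟨haξ, by rw [hDaξ, add_sub_cancel_right]⟩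

/-- If `a` is weakly `D`-differentiable then `a` maps `dom D` into `dom D`,
and `Da − aD` agrees on `dom D` with the bounded operator `wD(a)`
(so `Da − aD` is bounded with closure `wD(a)`). -/
theorem weakDeriv_domain_invariant_and_commutator_bounded
    (D : H →ₗ.[ℂ] H) (hD : IsSelfAdjoint D)
    (U : ℝ → H →L[ℂ] H) (hU : IsStoneGroupOf D U)
    (a b : H →L[ℂ] H) (hw : IsWeakDeriv D a b) :
    ∀ ξ : D.domain, ∃ h : a (ξ : H) ∈ D.domain,
      D ⟨a (ξ : H), h⟩ - a (D ξ) = b (ξ : H) :=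
  weakDeriv_domain_invariant_and_commutator_bounded_general D hD a b hw
end

section
/- Let D be a self-adjoint operator on H and a ∈ B(H). Suppose the domain of the commutator Da − aD (i.e., {ξ ∈ dom(D) : aξ ∈ dom(D)}) is a core for D and Da − aD is bounded on this domain. Then a is weakly D-differentiable and wD(a) equals the closure of Da − aD. -/
/-
The identity `⟪b ξ, η⟫ = ⟪a ξ, D η⟫ - ⟪a (D ξ), η⟫` holds for `ξ` in the core by symmetry of `D`,
and for fixed `η` both sides are continuous in `(ξ, D ξ)`. Since the core is dense in the graph of
`D`, the identity extends to all of `dom D`.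
-/

open Complex Filter Topology MeasureTheory
open scoped Topology

local notation "⟪" x ", " y "⟫" => @inner ℂ _ _ x y

variable {H : Type*} [NormedAddCommGroup H] [InnerProductSpace ℂ H] [CompleteSpace H]

theorem IsSelfAdjoint.isFormalAdjoint {𝕜 E : Type*} [RCLike 𝕜] [NormedAddCommGroup E]
    [InnerProductSpace 𝕜 E] [CompleteSpace E] {A : E →ₗ.[𝕜] E} (hA : IsSelfAdjoint A) :
    A.IsFormalAdjoint A := by
  have h := A.adjoint_isFormalAdjoint hA.dense_domain
  rwa [LinearPMap.isSelfAdjoint_def.mp hA] at h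

namespace LinearPMap

variable {𝕜 E F : Type*} [NormedField 𝕜] [SeminormedAddCommGroup E] [NormedSpace 𝕜 E]
  [SeminormedAddCommGroup F] [NormedSpace 𝕜 F]

theorem graph_mem_of_isClosed_of_approx (T : E →ₗ.[𝕜] F) {P : T.domain → Prop}
    (happrox : ∀ x : T.domain, ∀ ε > (0 : ℝ), ∃ y : T.domain,
      P y ∧ ‖(x : E) - (y : E)‖ < ε ∧ ‖T x - T y‖ < ε)
    {s : Set (E × F)} (hs : _root_.IsClosed s) (hP : ∀ y, P y → ((y : E), T y) ∈ s)
    (x : T.domain) :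
    ((x : E), T x) ∈ s := by
  refine hs.closure_subset (Metric.mem_closure_iff.mpr fun ε hε => ?_)
  obtain ⟨y, hy, hxy, hTxy⟩ := happrox x ε hε
  refine ⟨((y : E), T y), hP y hy, ?_⟩
  rw [Prod.dist_eq, dist_eq_norm, dist_eq_norm]
  exact max_lt hxy hTxy

end LinearPMap

theorem LinearPMap.IsFormalAdjoint.inner_commutator {𝕜 E : Type*} [RCLike 𝕜]
    [NormedAddCommGroup E] [InnerProductSpace 𝕜 E] {D : E →ₗ.[𝕜] E} (hD : D.IsFormalAdjoint D)
    (a : E →L[𝕜] E) (x y : D.domain) (h : a (x : E) ∈ D.domain) :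
    inner 𝕜 (D ⟨a (x : E), h⟩ - a (D x)) (y : E) =
      inner 𝕜 (a (x : E)) (D y) - inner 𝕜 (a (D x)) (y : E) := by
  rw [inner_sub_left, hD ⟨a (x : E), h⟩ y]

/-- If the domain `{ξ ∈ dom D : aξ ∈ dom D}` of `Da − aD` is a core for `D`
(every `ξ ∈ dom D` is graph-approximated by such vectors) and `Da − aD`
agrees there with a bounded operator `b`, then `a` is weakly `D`-differentiable
with `wD(a) = b`. -/
theorem isWeakDeriv_of_bounded_commutator_on_core
    (D : H →ₗ.[ℂ] H) (hD : IsSelfAdjoint D)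
    (a b : H →L[ℂ] H)
    (hcore : ∀ ξ : D.domain, ∀ ε > (0 : ℝ), ∃ η : D.domain,
      a (η : H) ∈ D.domain ∧ ‖(ξ : H) - (η : H)‖ < ε ∧ ‖D ξ - D η‖ < ε)
    (hb : ∀ (ξ : D.domain) (h : a (ξ : H) ∈ D.domain),
      D ⟨a (ξ : H), h⟩ - a (D ξ) = b (ξ : H)) :
    IsWeakDeriv D a b := by
  intro ξ η
  let s : Set (H × H) := {p | ⟪b p.1, (η : H)⟫ = ⟪a p.1, D η⟫ - ⟪a p.2, (η : H)⟫}
  have hs : IsClosed s := isClosed_eq (by fun_prop) (by fun_prop)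
  refine D.graph_mem_of_isClosed_of_approx hcore hs (fun ζ hζ => ?_) ξ
  change ⟪b (ζ : H), (η : H)⟫ = ⟪a (ζ : H), D η⟫ - ⟪a (D ζ), (η : H)⟫
  rw [← hb ζ hζ, hD.isFormalAdjoint.inner_commutator a ζ η hζ]
end

section
/- Let D be a self-adjoint operator on H and a, b ∈ B(H) both weakly D-differentiable. Then ab is weakly D-differentiable and the Leibniz rule holds: wD(ab) = wD(a) b + a wD(b). -/
open Complex Filter Topology MeasureTheory
open scoped Topology

local notation "⟪" x ", " y "⟫" => @inner ℂ _ _ x y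

variable {H : Type*} [NormedAddCommGroup H] [InnerProductSpace ℂ H] [CompleteSpace H]

/-! Self-adjointness turns the weak derivative identity for `b` into an identity for `D†`:
`b` maps `dom D` into `dom D† = dom D`, with `D (b ξ) = b' ξ + b (D ξ)`. The Leibniz rule is
then the weak derivative identity for `a` tested at `b ξ ∈ dom D`. -/

open LinearPMap

namespace IsWeakDeriv

variable {D : H →ₗ.[ℂ] H} {b b' : H →L[ℂ] H}

omit [CompleteSpace H] in
theorem inner_add_eq_inner_apply (hwb : IsWeakDeriv D b b') (ξ η : D.domain) :
    ⟪b' ξ + b (D ξ), (η : H)⟫ = ⟪b ξ, D η⟫ := by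
  rw [inner_add_left, hwb ξ η, sub_add_cancel]

theorem apply_mem_adjoint_domain (hwb : IsWeakDeriv D b b') (ξ : D.domain) :
    b ξ ∈ D†.domain :=
  mem_adjoint_domain_of_exists _ ⟨_, hwb.inner_add_eq_inner_apply ξ⟩

theorem adjoint_apply (hD : Dense (D.domain : Set H)) (hwb : IsWeakDeriv D b b')
    (ξ : D.domain) : D† ⟨b ξ, hwb.apply_mem_adjoint_domain ξ⟩ = b' ξ + b (D ξ) :=
  adjoint_apply_eq hD _ (hwb.inner_add_eq_inner_apply ξ)

theorem exists_domain_apply_eq (hD : IsSelfAdjoint D) (hwb : IsWeakDeriv D b b')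
    (ξ : D.domain) : ∃ ζ : D.domain, (ζ : H) = b ξ ∧ D ζ = b' ξ + b (D ξ) := by
  have h : ∃ ζ : D†.domain, (ζ : H) = b ξ ∧ D† ζ = b' ξ + b (D ξ) :=
    ⟨_, rfl, hwb.adjoint_apply hD.dense_domain ξ⟩
  rwa [isSelfAdjoint_def.mp hD] at h

end IsWeakDeriv

theorem isWeakDeriv_mul_general
    (D : H →ₗ.[ℂ] H) (hD : IsSelfAdjoint D)
    (a b a' b' : H →L[ℂ] H)
    (hwa : IsWeakDeriv D a a') (hwb : IsWeakDeriv D b b') :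
    IsWeakDeriv D (a.comp b) (a'.comp b + a.comp b') := by
  intro ξ η
  obtain ⟨ζ, hζ, hDζ⟩ := hwb.exists_domain_apply_eq hD ξ
  have key := hwa ζ η
  rw [hζ, hDζ, _root_.map_add, inner_add_left] at key
  simp only [_root_.add_apply, ContinuousLinearMap.comp_apply, inner_add_left, key]
  ring

/-- Leibniz rule: if `a` and `b` are weakly `D`-differentiable, so is `ab`,
with `wD(ab) = wD(a) b + a wD(b)`. -/
theorem isWeakDeriv_mul
    (D : H →ₗ.[ℂ] H) (hD : IsSelfAdjoint D)
    (U : ℝ → H →L[ℂ] H) (hU : IsStoneGroupOf D U)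
    (a b a' b' : H →L[ℂ] H)
    (hwa : IsWeakDeriv D a a') (hwb : IsWeakDeriv D b b') :
    IsWeakDeriv D (a.comp b) (a'.comp b + a.comp b') :=
  isWeakDeriv_mul_general D hD a b a' b' hwa hwb
end

section
/- Let D be a self-adjoint operator on H and a ∈ B(H) weakly D-differentiable. Then the adjoint a* is weakly D-differentiable and wD(a*) = −(wD(a))*. -/
open Complex Filter Topology MeasureTheory
open scoped Topology

local notation "⟪" x ", " y "⟫" => @inner ℂ _ _ x y

variable {H : Type*} [NormedAddCommGroup H] [InnerProductSpace ℂ H] [CompleteSpace H]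

theorem isWeakDeriv_adjoint_general
    (D : H →ₗ.[ℂ] H)
    (a b : H →L[ℂ] H) (hw : IsWeakDeriv D a b) :
    IsWeakDeriv D (ContinuousLinearMap.adjoint a) (-(ContinuousLinearMap.adjoint b)) := by
  intro ξ η
  have hconj := congrArg (starRingEnd ℂ) (hw η ξ)
  simp only [map_sub, inner_conj_symm] at hconj
  simp only [neg_apply, inner_neg_left,
    ContinuousLinearMap.adjoint_inner_left, hconj]
  ring

/-- If `a` is weakly `D`-differentiable then so is `a*`, and `wD(a*) = −(wD(a))*`. -/
theorem isWeakDeriv_adjoint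
    (D : H →ₗ.[ℂ] H) (hD : IsSelfAdjoint D)
    (a b : H →L[ℂ] H) (hw : IsWeakDeriv D a b) :
    IsWeakDeriv D (ContinuousLinearMap.adjoint a) (-(ContinuousLinearMap.adjoint b)) :=
  isWeakDeriv_adjoint_general D a b hw
end

section
/- Let D be a self-adjoint operator on H. The set of weakly D-differentiable operators in B(H), equipped with the norm ‖a‖ + ‖wD(a)‖, is complete: if (a_k) is a sequence of weakly D-differentiable operators such that (a_k) and (wD(a_k)) are both Cauchy in operator norm, then a = lim a_k is weakly D-differentiable and wD(a) = lim wD(a_k). -/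
open Complex Filter Topology MeasureTheory
open scoped Topology

local notation "⟪" x ", " y "⟫" => @inner ℂ _ _ x y

variable {H : Type*} [NormedAddCommGroup H] [InnerProductSpace ℂ H] [CompleteSpace H]

theorem isClosed_setOf_isWeakDeriv {E : Type*} [NormedAddCommGroup E] [InnerProductSpace ℂ E]
    (D : E →ₗ.[ℂ] E) : IsClosed {p : (E →L[ℂ] E) × (E →L[ℂ] E) | IsWeakDeriv D p.1 p.2} := by
  simp only [IsWeakDeriv, Set.ofPred_forall]
  exact isClosed_iInter fun ξ => isClosed_iInter fun η => isClosed_eq (by fun_prop) (by fun_prop)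

theorem isWeakDeriv_of_cauchy_general
    (D : H →ₗ.[ℂ] H)
    (a b : ℕ → H →L[ℂ] H)
    (hw : ∀ k, IsWeakDeriv D (a k) (b k))
    (hCa : CauchySeq a) (hCb : CauchySeq b) :
    ∃ A B : H →L[ℂ] H, Tendsto a atTop (𝓝 A) ∧ Tendsto b atTop (𝓝 B) ∧
      IsWeakDeriv D A B := by
  obtain ⟨A, hA⟩ := cauchySeq_tendsto_of_complete hCa
  obtain ⟨B, hB⟩ := cauchySeq_tendsto_of_complete hCb
  exact ⟨A, B, hA, hB, (isClosed_setOf_isWeakDeriv D).mem_of_tendsto (hA.prodMk_nhds hB)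
    (Eventually.of_forall hw)⟩

/-- Completeness: if `(a k)` are weakly `D`-differentiable with derivatives `(b k)`,
and both sequences are Cauchy in operator norm, then the limit `A` of `(a k)` is
weakly `D`-differentiable with `wD(A) = lim b k`. -/
theorem isWeakDeriv_of_cauchy
    (D : H →ₗ.[ℂ] H) (hD : IsSelfAdjoint D)
    (a b : ℕ → H →L[ℂ] H)
    (hw : ∀ k, IsWeakDeriv D (a k) (b k))
    (hCa : CauchySeq a) (hCb : CauchySeq b) :
    ∃ A B : H →L[ℂ] H, Tendsto a atTop (𝓝 A) ∧ Tendsto b atTop (𝓝 B) ∧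
      IsWeakDeriv D A B :=
  isWeakDeriv_of_cauchy_general D a b hw hCa hCb
end

section
/- Let D be a self-adjoint operator on H with spectral projections e_n for the intervals (n−1, n], n ∈ ℤ, and let d_n := D restricted to e_n H (a bounded self-adjoint operator on e_n H). If a ∈ B(H) is weakly D-differentiable, with wD(a) the operator implementing the form ⟨aξ,Dη⟩ − ⟨aDξ,η⟩, then for all r, c ∈ ℤ the matrix entry of wD(a) satisfies e_r wD(a)|_{e_c H} = d_r (e_r a|_{e_c H}) − e_r a e_c d_c as operators from e_c H to e_r H. -/
open Complex Filter Topology MeasureTheory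
open scoped Topology

local notation "⟪" x ", " y "⟫" => @inner ℂ _ _ x y

variable {H : Type*} [NormedAddCommGroup H] [InnerProductSpace ℂ H] [CompleteSpace H]

/-- Let `e n` (`n ∈ ℤ`) be the spectral projections of `D` for the intervals `(n−1, n]`,
and `d n` the (bounded, self-adjoint) restriction of `D` to `e n H`. If `a` is weakly
`D`-differentiable then the matrix entries of `wD(a)` are
`e_r wD(a) e_c = d_r (e_r a e_c) − (e_r a e_c) d_c`. -/
theorem weakDeriv_matrix_entries
    (D : H →ₗ.[ℂ] H) (hD : IsSelfAdjoint D)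
    (e d : ℤ → H →L[ℂ] H)
    (hidem : ∀ n, IsIdempotentElem (e n))
    (hesa : ∀ n, IsSelfAdjoint (e n))
    (hdsa : ∀ n, IsSelfAdjoint (d n))
    (hde : ∀ n, d n = (e n).comp ((d n).comp (e n)))
    (hmem : ∀ (n : ℤ) (ξ : H), e n ξ ∈ D.domain)
    (hact : ∀ (n : ℤ) (ξ : H), D ⟨e n ξ, hmem n ξ⟩ = d n (e n ξ))
    (a b : H →L[ℂ] H) (hw : IsWeakDeriv D a b) :
    ∀ r c : ℤ, (e r).comp (b.comp (e c)) =
      (d r).comp ((e r).comp (a.comp (e c))) -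
        ((e r).comp (a.comp (e c))).comp (d c) := by
  
  have hdeP : ∀ n (x : H), d n x = e n (d n (e n x)) := fun n x => by
    have := congrArg (fun T : H →L[ℂ] H => T x) (hde n); simpa using this
  have hee : ∀ n (x : H), e n (e n x) = e n x := fun n x => by
    have := congrArg (fun T : H →L[ℂ] H => T x) (hidem n).eq; simpa using this
  have hdep : ∀ n (x : H), d n (e n x) = d n x := fun n x => by
    rw [hdeP n (e n x), hee, ← hdeP n x]
  have hedp : ∀ n (x : H), e n (d n x) = d n x := fun n x => by
    conv_lhs => rw [hdeP n x]
    rw [hee, ← hdeP n x]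
  intro r c
  ext ξ
  apply ext_inner_right ℂ
  intro η
  simp only [ContinuousLinearMap.comp_apply, ContinuousLinearMap.sub_apply]
  have hA : ⟪a (e c ξ), d r (e r η)⟫ = ⟪d r (a (e c ξ)), e r η⟫ :=
    ((hdsa r).isSymmetric _ _).symm
  have hB : ⟪d r (a (e c ξ)), e r η⟫ = ⟪e r (d r (a (e c ξ))), η⟫ :=
    ((hesa r).isSymmetric _ _).symm
  have hC : ⟪a (d c (e c ξ)), e r η⟫ = ⟪e r (a (d c (e c ξ))), η⟫ :=
    ((hesa r).isSymmetric _ _).symm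
  calc ⟪e r (b (e c ξ)), η⟫
      = ⟪b (e c ξ), e r η⟫ := (hesa r).isSymmetric _ _
    _ = ⟪a (e c ξ), D ⟨e r η, hmem r η⟩⟫ - ⟪a (D ⟨e c ξ, hmem c ξ⟩), e r η⟫ :=
        hw ⟨e c ξ, hmem c ξ⟩ ⟨e r η, hmem r η⟩
    _ = ⟪a (e c ξ), d r (e r η)⟫ - ⟪a (d c (e c ξ)), e r η⟫ := by rw [hact, hact]
    _ = ⟪e r (d r (a (e c ξ))), η⟫ - ⟪e r (a (d c (e c ξ))), η⟫ := by rw [hA, hB, hC]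
    _ = ⟪d r (e r (a (e c ξ))), η⟫ - ⟪e r (a (e c (d c ξ))), η⟫ := by
        rw [hedp, hdep, ← hdep r (a (e c ξ))]
        conv_lhs => rw [← hedp c ξ]
    _ = ⟪d r (e r (a (e c ξ))) - e r (a (e c (d c ξ))), η⟫ := (inner_sub_left _ _ _).symm
end
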